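/- arXiv:1903.04798 — 5 statements merged into one kernel-verified Lean document; each statement's English description precedes it below -/
import Mathlib

section
/- Let X ⊂ R^n be compact, f Lipschitz, and suppose the triple (u, v, w) with u ≥ 0, v ∈ C¹(X), w ∈ C⁰(X) satisfies: ∇v(x)·f(x) ≤ u for all x ∈ X, w ≥ v + 1 on X, w ≥ 0 on X, and v ≥ 0 on ∂X. Then for any t > 0, the set {x₀ ∈ int(X) : v(x₀) + u·t < 0} is contained in X_t := {x₀ ∈ int(X) : x(s|x₀) ∈ int(X) for all s ∈ [0,t]}. -/
open Set Topology Filter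

/-- If `(u,v,w)` is dual feasible (`u ≥ 0`, `∇v·f ≤ u` on `X`, `w ≥ v+1` and
`w ≥ 0` on `X`, `v ≥ 0` on `∂X`), then for any `t > 0`,
`{x₀ ∈ int X : v x₀ + u·t < 0} ⊆ X_t := {x₀ ∈ int X : x(s|x₀) ∈ int X ∀ s ∈ [0,t]}`. -/
theorem dual_feasible_sublevel_subset_Xt
    {n : ℕ} (X : Set (EuclideanSpace ℝ (Fin n))) (hX : IsCompact X)
    (f : EuclideanSpace ℝ (Fin n) → EuclideanSpace ℝ (Fin n))
    (K : NNReal) (hf : LipschitzOnWith K f X)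
    (u : ℝ) (hu : 0 ≤ u)
    (v w : EuclideanSpace ℝ (Fin n) → ℝ)
    (v' : EuclideanSpace ℝ (Fin n) → EuclideanSpace ℝ (Fin n) →L[ℝ] ℝ)
    (hv : ∀ x ∈ X, HasFDerivAt v (v' x) x)
    (hw : ContinuousOn w X)
    (hvf : ∀ x ∈ X, v' x (f x) ≤ u)
    (hw1 : ∀ x ∈ X, v x + 1 ≤ w x)
    (hw0 : ∀ x ∈ X, 0 ≤ w x)
    (hvb : ∀ x ∈ frontier X, 0 ≤ v x)
    -- the flow of ẋ = f(x)
    (φ : EuclideanSpace ℝ (Fin n) → ℝ → EuclideanSpace ℝ (Fin n))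
    (hφ0 : ∀ x, φ x 0 = x)
    (hφd : ∀ x t, HasDerivAt (φ x) (f (φ x t)) t)
    (t : ℝ) (ht : 0 < t) :
    {x₀ ∈ interior X | v x₀ + u * t < 0} ⊆
      {x₀ ∈ interior X | ∀ s ∈ Icc (0 : ℝ) t, φ x₀ s ∈ interior X} := by
  rintro x₀ ⟨hx₀, hvx₀⟩
  refine ⟨hx₀, ?_⟩
  by_contra hcon
  push_neg at hcon
  obtain ⟨s₀, hs₀, hs₀X⟩ := hcon
  have hXclosed : IsClosed X := hX.isClosed
  have hφc : Continuous (φ x₀) := continuous_iff_continuousAt.mpr fun s => (hφd x₀ s).continuousAt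
  -- the set of times in [0,t] at which the trajectory has left the interior
  set S : Set ℝ := {s ∈ Icc (0:ℝ) t | φ x₀ s ∉ interior X} with hS
  have hSclosed : IsClosed S := by
    have : S = Icc (0:ℝ) t ∩ (φ x₀) ⁻¹' (interior X)ᶜ := by
      ext s; simp [hS, and_comm]
    rw [this]
    exact isClosed_Icc.inter (isOpen_interior.isClosed_compl.preimage hφc)
  have hSne : S.Nonempty := ⟨s₀, hs₀, hs₀X⟩
  have hSbdd : BddBelow S := ⟨0, fun s hs => hs.1.1⟩
  set τ : ℝ := sInf S with hτ
  have hτS : τ ∈ S := hSclosed.csInf_mem hSne hSbdd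
  have hτ0 : 0 ≤ τ := hτS.1.1
  have hτt : τ ≤ t := hτS.1.2
  have hτpos : 0 < τ := by
    rcases hτ0.lt_or_eq with h | h
    · exact h
    · exfalso; apply hτS.2; rw [← h, hφ0]; exact hx₀
  -- before τ, the trajectory stays in the interior
  have hbefore : ∀ s ∈ Ico (0:ℝ) τ, φ x₀ s ∈ interior X := by
    intro s hs
    by_contra h
    exact absurd (csInf_le hSbdd ⟨⟨hs.1, hs.2.le.trans hτt⟩, h⟩) (not_le.2 hs.2)
  -- φ x₀ τ is a limit of points of X
  have hτX : φ x₀ τ ∈ X := by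
    have hne : (𝓝[Ico (0:ℝ) τ] τ).NeBot := by
      refine mem_closure_iff_nhdsWithin_neBot.mp ?_
      rw [closure_Ico hτpos.ne]
      exact ⟨hτ0, le_refl τ⟩
    have htend : Filter.Tendsto (φ x₀) (𝓝[Ico (0:ℝ) τ] τ) (𝓝 (φ x₀ τ)) :=
      (hφc.tendsto τ).mono_left nhdsWithin_le_nhds
    have := mem_closure_of_tendsto htend
      (Filter.eventually_of_mem self_mem_nhdsWithin
        (fun r hr => interior_subset (hbefore r hr)))
    rwa [hXclosed.closure_eq] at this
  -- the trajectory stays in X on [0, τ]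
  have hin : ∀ s ∈ Icc (0:ℝ) τ, φ x₀ s ∈ X := by
    intro s hs
    rcases hs.2.lt_or_eq with h | h
    · exact interior_subset (hbefore s ⟨hs.1, h⟩)
    · rw [h]; exact hτX
  have hτfront : φ x₀ τ ∈ frontier X := ⟨subset_closure hτX, hτS.2⟩
  -- v (φ x₀ s) - u * s is antitone on [0, τ]
  set g : ℝ → ℝ := fun s => v (φ x₀ s) - u * s with hg
  have hganti : AntitoneOn g (Icc 0 τ) := by
    apply antitoneOn_of_hasDerivWithinAt_nonpos (convex_Icc 0 τ)
      (f' := fun s => v' (φ x₀ s) (f (φ x₀ s)) - u)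
    · intro s hs
      exact (((hv _ (hin s hs)).comp_hasDerivAt s (hφd x₀ s)).sub
        ((hasDerivAt_id s).const_mul u)).continuousAt.continuousWithinAt
    · intro s hs
      rw [interior_Icc] at hs
      have := (((hv _ (hin s ⟨hs.1.le, hs.2.le⟩)).comp_hasDerivAt s (hφd x₀ s)).sub
        ((hasDerivAt_id s).const_mul u)).hasDerivWithinAt (s := interior (Icc 0 τ))
      rw [mul_one] at this
      exact this
    · intro s hs
      rw [interior_Icc] at hs
      have := hvf _ (hin s ⟨hs.1.le, hs.2.le⟩)
      linarith
  have hg0 : g τ ≤ g 0 := hganti ⟨le_refl 0, hτ0⟩ ⟨hτ0, le_refl τ⟩ hτ0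
  have hvbτ := hvb _ hτfront
  simp only [hg, hφ0, mul_zero, sub_zero] at hg0
  have huτ : u * τ ≤ u * t := mul_le_mul_of_nonneg_left hτt hu
  linarith
end

section
/- Under the same hypotheses, if moreover u = 0 (i.e., ∇v·f ≤ 0 on X and v ≥ 0 on ∂X), then the set {x₀ ∈ int(X) : v(x₀) < 0} is contained in X∞ = ∩_{t>0} X_t and is positively invariant under the flow of f. -/
/-!
If a trajectory started in `int X ∩ {v < 0}` ever left `int X`, at its first exit time `τ`
it would sit on `∂X` after having stayed in `X` on `[0, τ]`. Along such a stretch `v` cannot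
increase, since `d/dt v(x(t)) = ∇v · f ≤ 0`, so `v(x(τ)) ≤ v(x₀) < 0`, contradicting `v ≥ 0`
on `∂X`. Hence the trajectory stays in `int X`, and then `v` keeps decreasing along it.
-/

open Set

lemma forall_nonneg_iff_forall_pos_forall_Icc {p : ℝ → Prop} :
    (∀ s ≥ (0 : ℝ), p s) ↔ ∀ t > (0 : ℝ), ∀ s ∈ Icc 0 t, p s :=
  ⟨fun h _ _ s hs => h s hs.1, fun h s hs => h (s + 1) (by linarith) s ⟨hs, by linarith⟩⟩

lemma exists_first_exit_frontier {α : Type*} [TopologicalSpace α] {s : Set α} {γ : ℝ → α}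
    (hγ : Continuous γ) {a b : ℝ} (hab : a ≤ b) (ha : γ a ∈ interior s)
    (hb : γ b ∉ interior s) :
    ∃ τ ∈ Ioc a b, γ τ ∈ frontier s ∧ MapsTo γ (Ico a τ) (interior s) := by
  set B := Icc a b ∩ γ ⁻¹' (interior s)ᶜ
  have hB_closed : IsClosed B :=
    isClosed_Icc.inter (isOpen_interior.isClosed_compl.preimage hγ)
  have hB_bdd : BddBelow B := ⟨a, fun t ht => ht.1.1⟩
  obtain ⟨⟨hτa, hτb⟩, hτ_exit⟩ : sInf B ∈ B :=
    hB_closed.csInf_mem ⟨b, ⟨hab, le_rfl⟩, hb⟩ hB_bdd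
  have hτa : a < sInf B := hτa.lt_of_ne fun h => hτ_exit (h ▸ ha)
  have hstay : MapsTo γ (Ico a (sInf B)) (interior s) := fun t ht => by
    by_contra hout
    exact (csInf_le hB_bdd ⟨⟨ht.1, ht.2.le.trans hτb⟩, hout⟩).not_gt ht.2
  have hτ_closure : γ (sInf B) ∈ closure (interior s) :=
    map_mem_closure hγ (by rw [closure_Ico hτa.ne]; exact right_mem_Icc.2 hτa.le) hstay
  exact ⟨sInf B, ⟨hτa, hτb⟩, ⟨closure_mono interior_subset hτ_closure, hτ_exit⟩,
    hstay⟩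

section Lyapunov

variable {E : Type*} [NormedAddCommGroup E] [NormedSpace ℝ E] {X : Set E} {f : E → E}
  {v : E → ℝ} {v' : E → E →L[ℝ] ℝ} {γ : ℝ → E}

lemma antitoneOn_comp_of_mapsTo (hv : ∀ x ∈ X, HasFDerivAt v (v' x) x)
    (hvf : ∀ x ∈ X, v' x (f x) ≤ 0) (hγ : ∀ t, HasDerivAt γ (f (γ t)) t) {a b : ℝ}
    (hγX : MapsTo γ (Icc a b) X) : AntitoneOn (v ∘ γ) (Icc a b) := by
  have hderiv : ∀ t ∈ Icc a b, HasDerivAt (v ∘ γ) (v' (γ t) (f (γ t))) t := fun t ht =>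
    (hv _ (hγX ht)).comp_hasDerivAt t (hγ t)
  refine antitoneOn_of_deriv_nonpos (convex_Icc a b)
    (fun t ht => (hderiv t ht).continuousAt.continuousWithinAt)
    (fun t ht =>
      (hderiv t (interior_subset ht)).differentiableAt.differentiableWithinAt)
    fun t ht => ?_
  rw [(hderiv t (interior_subset ht)).deriv]
  exact hvf _ (hγX (interior_subset ht))

lemma mem_interior_of_frontier_nonneg (hX : IsClosed X)
    (hv : ∀ x ∈ X, HasFDerivAt v (v' x) x) (hvf : ∀ x ∈ X, v' x (f x) ≤ 0)
    (hvb : ∀ x ∈ frontier X, 0 ≤ v x)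
    (hγ : ∀ t, HasDerivAt γ (f (γ t)) t) (hγ₀ : γ 0 ∈ interior X) (hvγ₀ : v (γ 0) < 0)
    {t : ℝ} (ht : 0 ≤ t) : γ t ∈ interior X := by
  by_contra hout
  obtain ⟨τ, ⟨hτ, -⟩, hτ_frontier, hstay⟩ := exists_first_exit_frontier
    (continuous_iff_continuousAt.2 fun t => (hγ t).continuousAt) ht hγ₀ hout
  have hγX : MapsTo γ (Icc 0 τ) X := fun s hs => by
    rcases hs.2.eq_or_lt with rfl | hsτ
    · exact frontier_subset_iff_isClosed.2 hX hτ_frontier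
    · exact interior_subset (hstay ⟨hs.1, hsτ⟩)
  have hdecrease : v (γ τ) ≤ v (γ 0) :=
    antitoneOn_comp_of_mapsTo hv hvf hγ hγX (left_mem_Icc.2 hτ.le) (right_mem_Icc.2 hτ.le)
      hτ.le
  linarith [hvb _ hτ_frontier]

end Lyapunov

theorem dual_feasible_u_zero_subset_MPI_and_invariant_general
    {n : ℕ} (X : Set (EuclideanSpace ℝ (Fin n))) (hX : IsCompact X)
    (f : EuclideanSpace ℝ (Fin n) → EuclideanSpace ℝ (Fin n))
    (v : EuclideanSpace ℝ (Fin n) → ℝ)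
    (v' : EuclideanSpace ℝ (Fin n) → EuclideanSpace ℝ (Fin n) →L[ℝ] ℝ)
    (hv : ∀ x ∈ X, HasFDerivAt v (v' x) x)
    (hvf : ∀ x ∈ X, v' x (f x) ≤ 0)
    (hvb : ∀ x ∈ frontier X, 0 ≤ v x)
    -- the flow of ẋ = f(x)
    (φ : EuclideanSpace ℝ (Fin n) → ℝ → EuclideanSpace ℝ (Fin n))
    (hφ0 : ∀ x, φ x 0 = x)
    (hφd : ∀ x t, HasDerivAt (φ x) (f (φ x t)) t)
    -- X_t and X∞
    (Xt : ℝ → Set (EuclideanSpace ℝ (Fin n)))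
    (hXt : ∀ t, Xt t = {x₀ ∈ interior X | ∀ s ∈ Icc (0 : ℝ) t, φ x₀ s ∈ interior X})
    (Xinf : Set (EuclideanSpace ℝ (Fin n)))
    (hXinf : Xinf = {x₀ ∈ interior X | ∀ s ≥ (0 : ℝ), φ x₀ s ∈ interior X}) :
    (Xinf = ⋂ t > (0 : ℝ), Xt t) ∧
    {x₀ ∈ interior X | v x₀ < 0} ⊆ Xinf ∧
    (∀ x₀ ∈ {x₀ ∈ interior X | v x₀ < 0}, ∀ t ≥ (0 : ℝ),
      φ x₀ t ∈ {x₀ ∈ interior X | v x₀ < 0}) := by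
  have hstay : ∀ x₀ ∈ {x₀ ∈ interior X | v x₀ < 0}, ∀ t ≥ (0 : ℝ), φ x₀ t ∈ interior X :=
    fun x₀ ⟨hx₀, hvx₀⟩ t ht => mem_interior_of_frontier_nonneg hX.isClosed hv hvf hvb
      (hφd x₀) (by rwa [hφ0]) (by rwa [hφ0]) ht
  refine ⟨?_, fun x₀ hx₀ => hXinf ▸ ⟨hx₀.1, hstay x₀ hx₀⟩,
    fun x₀ hx₀ t ht => ⟨hstay x₀ hx₀ t ht, ?_⟩⟩
  · ext x₀
    simp only [hXinf, hXt, mem_iInter, mem_ofPred_eq, forall_nonneg_iff_forall_pos_forall_Icc]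
    exact ⟨fun ⟨hx₀, h⟩ t ht => ⟨hx₀, h t ht⟩,
      fun h => ⟨(h 1 one_pos).1, fun t ht => (h t ht).2⟩⟩
  · have hγX : MapsTo (φ x₀) (Icc 0 t) X := fun s hs =>
      interior_subset (hstay x₀ hx₀ s hs.1)
    have hdecrease := antitoneOn_comp_of_mapsTo hv hvf (hφd x₀) hγX (left_mem_Icc.2 ht)
      (right_mem_Icc.2 ht) ht
    simp only [Function.comp, hφ0] at hdecrease
    exact hdecrease.trans_lt hx₀.2

/-- In the `u = 0` case (`∇v·f ≤ 0` on `X`, `v ≥ 0` on `∂X`), the set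
`{x₀ ∈ int X : v x₀ < 0}` is contained in `X∞ = ∩_{t>0} X_t` and is positively
invariant under the flow of `f`. -/
theorem dual_feasible_u_zero_subset_MPI_and_invariant
    {n : ℕ} (X : Set (EuclideanSpace ℝ (Fin n))) (hX : IsCompact X)
    (f : EuclideanSpace ℝ (Fin n) → EuclideanSpace ℝ (Fin n))
    (K : NNReal) (hf : LipschitzOnWith K f X)
    (v w : EuclideanSpace ℝ (Fin n) → ℝ)
    (v' : EuclideanSpace ℝ (Fin n) → EuclideanSpace ℝ (Fin n) →L[ℝ] ℝ)
    (hv : ∀ x ∈ X, HasFDerivAt v (v' x) x)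
    (hw : ContinuousOn w X)
    (hvf : ∀ x ∈ X, v' x (f x) ≤ 0)
    (hw1 : ∀ x ∈ X, v x + 1 ≤ w x)
    (hw0 : ∀ x ∈ X, 0 ≤ w x)
    (hvb : ∀ x ∈ frontier X, 0 ≤ v x)
    -- the flow of ẋ = f(x)
    (φ : EuclideanSpace ℝ (Fin n) → ℝ → EuclideanSpace ℝ (Fin n))
    (hφ0 : ∀ x, φ x 0 = x)
    (hφd : ∀ x t, HasDerivAt (φ x) (f (φ x t)) t)
    -- X_t and X∞
    (Xt : ℝ → Set (EuclideanSpace ℝ (Fin n)))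
    (hXt : ∀ t, Xt t = {x₀ ∈ interior X | ∀ s ∈ Icc (0 : ℝ) t, φ x₀ s ∈ interior X})
    (Xinf : Set (EuclideanSpace ℝ (Fin n)))
    (hXinf : Xinf = {x₀ ∈ interior X | ∀ s ≥ (0 : ℝ), φ x₀ s ∈ interior X}) :
    (Xinf = ⋂ t > (0 : ℝ), Xt t) ∧
    {x₀ ∈ interior X | v x₀ < 0} ⊆ Xinf ∧
    (∀ x₀ ∈ {x₀ ∈ interior X | v x₀ < 0}, ∀ t ≥ (0 : ℝ),
      φ x₀ t ∈ {x₀ ∈ interior X | v x₀ < 0}) :=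
  dual_feasible_u_zero_subset_MPI_and_invariant_general X hX f v v' hv hvf hvb φ hφ0 hφd Xt hXt Xinf
    hXinf
end

section
/- Suppose (u, v, w) satisfies u ≥ 0, ∇v·f ≤ u on X, w ≥ v + 1 on X, w ≥ 0 on X, and v ≥ 0 on ∂X, and suppose (μ₀, μ̂₀, μ, μ∂) are nonnegative measures on X, X, X, ∂X respectively satisfying div(fμ) + μ∂ = μ₀ (i.e., −∫∇v̄·f dμ + ∫v̄ dμ∂ = ∫v̄ dμ₀ for all v̄ ∈ C¹(X)), μ₀ + μ̂₀ = λ, and μ(X) ≤ T·λ(X). Then ∫_X w dλ + u·T·λ(X) ≥ μ₀(X) (weak duality). -/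
open Set MeasureTheory

/-- weak duality: If `(u,v,w)` is dual feasible and `(μ₀, μhat₀, μ, μbd)` is
primal feasible (Liouville equation `div(fμ) + μbd = μ₀` tested against all `vbar ∈ C¹(X)`,
`μ₀ + μhat₀ = λ|_X`, `μ(X) ≤ T·λ(X)`), then `∫_X w dλ + u·T·λ(X) ≥ μ₀(X)`. -/
theorem weak_duality_MPI
    {n : ℕ} (X : Set (EuclideanSpace ℝ (Fin n))) (hX : IsCompact X)
    (f : EuclideanSpace ℝ (Fin n) → EuclideanSpace ℝ (Fin n))
    (Kf : NNReal) (hf : LipschitzOnWith Kf f X)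
    (T : ℝ) (hT : 0 ≤ T)
    -- the dual feasible triple (u, v, w)
    (u : ℝ) (hu : 0 ≤ u)
    (v w : EuclideanSpace ℝ (Fin n) → ℝ)
    (v' : EuclideanSpace ℝ (Fin n) → EuclideanSpace ℝ (Fin n) →L[ℝ] ℝ)
    (hv : ∀ x ∈ X, HasFDerivAt v (v' x) x)
    (hw : ContinuousOn w X)
    (hvf : ∀ x ∈ X, v' x (f x) ≤ u)
    (hw1 : ∀ x ∈ X, v x + 1 ≤ w x)
    (hw0 : ∀ x ∈ X, 0 ≤ w x)
    (hvb : ∀ x ∈ frontier X, 0 ≤ v x)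
    -- the primal feasible quadruplet (μ₀, μhat₀, μ, μbd)
    (μ₀ μhat₀ μ μbd : Measure (EuclideanSpace ℝ (Fin n)))
    [IsFiniteMeasure μ₀] [IsFiniteMeasure μhat₀] [IsFiniteMeasure μ] [IsFiniteMeasure μbd]
    (hμ₀X : μ₀ Xᶜ = 0) (hμhat₀X : μhat₀ Xᶜ = 0) (hμX : μ Xᶜ = 0)
    (hμbdX : μbd (frontier X)ᶜ = 0)
    -- Liouville equation div(fμ) + μbd = μ₀ tested against C¹(X) functions
    (hliou : ∀ (vbar : EuclideanSpace ℝ (Fin n) → ℝ)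
      (vbar' : EuclideanSpace ℝ (Fin n) → EuclideanSpace ℝ (Fin n) →L[ℝ] ℝ),
      (∀ x ∈ X, HasFDerivAt vbar (vbar' x) x) →
      -(∫ x, vbar' x (f x) ∂μ) + ∫ x, vbar x ∂μbd = ∫ x, vbar x ∂μ₀)
    (hsum : μ₀ + μhat₀ = volume.restrict X)
    (hmass : (μ X).toReal ≤ T * (volume X).toReal) :
    (μ₀ X).toReal ≤ (∫ x in X, w x) + u * T * (volume X).toReal := by
  have hXm : MeasurableSet X := hX.isClosed.measurableSet
  -- a.e. membership facts
  have hae₀ : ∀ᵐ x ∂μ₀, x ∈ X := by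
    rw [MeasureTheory.ae_iff]
    exact hμ₀X
  have haehat : ∀ᵐ x ∂μhat₀, x ∈ X := by
    rw [MeasureTheory.ae_iff]
    exact hμhat₀X
  have haeμ : ∀ᵐ x ∂μ, x ∈ X := by
    rw [MeasureTheory.ae_iff]
    exact hμX
  have haebd : ∀ᵐ x ∂μbd, x ∈ frontier X := by
    rw [MeasureTheory.ae_iff]
    exact hμbdX
  have hr₀ : μ₀.restrict X = μ₀ := Measure.restrict_eq_self_of_ae_mem hae₀
  have hrhat : μhat₀.restrict X = μhat₀ := Measure.restrict_eq_self_of_ae_mem haehat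
  -- continuity of v on X
  have hcv : ContinuousOn v X := fun x hx => (hv x hx).continuousAt.continuousWithinAt
  -- integrability of v and w against μ₀ and μhat₀
  have hiv₀ : Integrable v μ₀ := by
    have := hcv.integrableOn_compact (μ := μ₀) hX
    rwa [IntegrableOn, hr₀] at this
  have hiw₀ : Integrable w μ₀ := by
    have := hw.integrableOn_compact (μ := μ₀) hX
    rwa [IntegrableOn, hr₀] at this
  have hiwhat : Integrable w μhat₀ := by
    have := hw.integrableOn_compact (μ := μhat₀) hX
    rwa [IntegrableOn, hrhat] at this
  -- measures of the whole space
  have hμ₀univ : μ₀ Set.univ = μ₀ X := by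
    rw [← Set.union_compl_self X, measure_union disjoint_compl_right hXm.compl, hμ₀X, add_zero]
  have hμuniv : μ Set.univ = μ X := by
    rw [← Set.union_compl_self X, measure_union disjoint_compl_right hXm.compl, hμX, add_zero]
  -- Step 1: bound ∫ v'(f) dμ ≤ u * μ(X)
  have hI1 : ∫ x, v' x (f x) ∂μ ≤ u * (μ X).toReal := by
    by_cases hint : Integrable (fun x => v' x (f x)) μ
    · have hb : (fun x => v' x (f x)) ≤ᵐ[μ] fun _ => u :=
        haeμ.mono fun x hx => hvf x hx
      calc ∫ x, v' x (f x) ∂μ ≤ ∫ _x, u ∂μ :=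
            integral_mono_ae hint (integrable_const u) hb
        _ = u * (μ X).toReal := by
            rw [integral_const, measureReal_def, hμuniv, smul_eq_mul, mul_comm]
    · rw [integral_undef hint]
      positivity
  -- Step 2: ∫ v dμbd ≥ 0
  have hI2 : 0 ≤ ∫ x, v x ∂μbd :=
    integral_nonneg_of_ae (haebd.mono fun x hx => hvb x hx)
  -- Step 3: Liouville with vbar = v gives lower bound on ∫ v dμ₀
  have hliouv := hliou v v' hv
  have hv₀lb : -(u * T * (volume X).toReal) ≤ ∫ x, v x ∂μ₀ := by
    rw [← hliouv]
    have h1 : u * (μ X).toReal ≤ u * (T * (volume X).toReal) :=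
      mul_le_mul_of_nonneg_left hmass hu
    have : -(u * (T * (volume X).toReal)) ≤ -(∫ x, v' x (f x) ∂μ) := by
      have := hI1.trans h1
      linarith
    nlinarith [hI2]
  -- Step 4: μ₀(X) ≤ ∫ w dμ₀ - ∫ v dμ₀
  have hone : ∫ _x, (1 : ℝ) ∂μ₀ = (μ₀ X).toReal := by
    rw [integral_const, measureReal_def, hμ₀univ, smul_eq_mul, mul_one]
  have hstep4 : (μ₀ X).toReal ≤ (∫ x, w x ∂μ₀) - ∫ x, v x ∂μ₀ := by
    rw [← hone, ← integral_sub hiw₀ hiv₀]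
    refine integral_mono_ae (integrable_const 1) (hiw₀.sub hiv₀)
      (hae₀.mono fun x hx => ?_)
    have := hw1 x hx
    simp only [Pi.sub_apply]
    linarith
  -- Step 5: ∫ w dμ₀ ≤ ∫_X w dλ
  have hstep5 : ∫ x, w x ∂μ₀ ≤ ∫ x in X, w x := by
    have hsplit : ∫ x in X, w x = (∫ x, w x ∂μ₀) + ∫ x, w x ∂μhat₀ := by
      rw [← hsum, integral_add_measure hiw₀ hiwhat]
    have hnn : 0 ≤ ∫ x, w x ∂μhat₀ :=
      integral_nonneg_of_ae (haehat.mono fun x hx => hw0 x hx)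
    linarith
  linarith
end

section
/- Let X∞^c := int(X) \ X∞ and suppose (u, v, w) is dual-feasible: u ≥ 0, ∇v·f ≤ u on X, w ≥ v + 1 ≥ 0 on X, w ≥ 0 on X, v ≥ 0 on ∂X, and assume the average exit time τ̄ := (1/λ(X))∫_{X∞^c} τ dλ is finite. Then ∫_X w dλ + u·τ̄·λ(X) ≥ λ(X∞^c). In particular if u = 0 then ∫_X w dλ ≥ λ(X∞^c), i.e., the cost of any feasible pair in the inner-approximation LP is at least the Lebesgue volume of the complement of the MPI set. -/
open Set MeasureTheory

/-!
Along a trajectory starting at `x₀ ∈ X∞ᶜ`, the function `t ↦ v (φ x₀ t) - u t` is nonincreasing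
up to the exit time `τ x₀`, at which the trajectory lies on `∂X` where `v ≥ 0`. Hence
`v x₀ ≥ -u τ x₀`, so `1 ≤ w x₀ + u τ x₀` on `X∞ᶜ`; integrating over `X∞ᶜ` and using `w ≥ 0` on `X`
gives `λ(X∞ᶜ) ≤ ∫_X w + u ∫_{X∞ᶜ} τ = ∫_X w + u τ̄ λ(X)`.
-/

section ExitTime

variable {α : Type*} {γ : ℝ → α} {U : Set α}

/-- Junk value `0` when `γ` never leaves `U` in positive time. -/
noncomputable def exitTime (γ : ℝ → α) (U : Set α) : ℝ := sInf {t | 0 ≤ t ∧ γ t ∉ U}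

lemma bddBelow_exitSet : BddBelow {t | 0 ≤ t ∧ γ t ∉ U} := ⟨0, fun _ ht => ht.1⟩

lemma mem_of_lt_exitTime {t : ℝ} (ht₀ : 0 ≤ t) (ht : t < exitTime γ U) : γ t ∈ U := by
  by_contra hγt
  exact (csInf_le bddBelow_exitSet ⟨ht₀, hγt⟩).not_gt ht

variable [TopologicalSpace α]

lemma exitTime_mem (hγ : Continuous γ) (hU : IsOpen U) (hexit : ∃ t, 0 ≤ t ∧ γ t ∉ U) :
    0 ≤ exitTime γ U ∧ γ (exitTime γ U) ∉ U :=
  (isClosed_Ici.inter (hU.isClosed_compl.preimage hγ)).csInf_mem hexit bddBelow_exitSet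

lemma exitTime_pos (hγ : Continuous γ) (hU : IsOpen U) (hexit : ∃ t, 0 ≤ t ∧ γ t ∉ U)
    (h₀ : γ 0 ∈ U) : 0 < exitTime γ U := by
  obtain ⟨hnonneg, hout⟩ := exitTime_mem hγ hU hexit
  refine hnonneg.lt_of_ne fun h => hout ?_
  rwa [← h]

lemma apply_exitTime_mem_frontier (hγ : Continuous γ) (hU : IsOpen U)
    (hexit : ∃ t, 0 ≤ t ∧ γ t ∉ U) (h₀ : γ 0 ∈ U) : γ (exitTime γ U) ∈ frontier U := by
  have hpos := exitTime_pos hγ hU hexit h₀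
  refine hU.frontier_eq ▸ ⟨?_, (exitTime_mem hγ hU hexit).2⟩
  have hcl : exitTime γ U ∈ closure (Ioo 0 (exitTime γ U)) := by
    rw [closure_Ioo hpos.ne]
    exact right_mem_Icc.2 hpos.le
  refine closure_mono ?_ (hγ.continuousWithinAt.mem_closure_image hcl)
  rintro _ ⟨t, ht, rfl⟩
  exact mem_of_lt_exitTime ht.1.le ht.2

end ExitTime

lemma sub_le_mul_of_hasFDerivAt_comp_le {E : Type*} [NormedAddCommGroup E] [NormedSpace ℝ E]
    {γ γ' : ℝ → E} {v : E → ℝ} {v' : E → E →L[ℝ] ℝ} {a b u : ℝ} (hab : a ≤ b)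
    (hγ : ∀ t ∈ Icc a b, HasDerivAt γ (γ' t) t)
    (hv : ∀ t ∈ Icc a b, HasFDerivAt v (v' (γ t)) (γ t))
    (hvγ : ∀ t ∈ Icc a b, v' (γ t) (γ' t) ≤ u) :
    v (γ b) - v (γ a) ≤ u * (b - a) := by
  have hderiv : ∀ t ∈ Icc a b, HasDerivAt (v ∘ γ) (v' (γ t) (γ' t)) t :=
    fun t ht => (hv t ht).comp_hasDerivAt t (hγ t ht)
  exact (convex_Icc a b).image_sub_le_mul_sub_of_deriv_le
    (fun t ht => (hderiv t ht).continuousAt.continuousWithinAt)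
    (fun t ht => (hderiv t (interior_subset ht)).differentiableAt.differentiableWithinAt)
    (fun t ht => (hderiv t (interior_subset ht)).deriv ▸ hvγ t (interior_subset ht))
    a (left_mem_Icc.2 hab) b (right_mem_Icc.2 hab) hab

lemma value_add_mul_exitTime_nonneg {E : Type*} [NormedAddCommGroup E] [NormedSpace ℝ E]
    {X : Set E} (hX : IsClosed X) {f : E → E} {γ : ℝ → E}
    (hγ : ∀ t, HasDerivAt γ (f (γ t)) t) (h₀ : γ 0 ∈ interior X)
    (hexit : ∃ t, 0 ≤ t ∧ γ t ∉ interior X)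
    {u : ℝ} {v : E → ℝ} {v' : E → E →L[ℝ] ℝ} (hv : ∀ x ∈ X, HasFDerivAt v (v' x) x)
    (hvf : ∀ x ∈ X, v' x (f x) ≤ u) (hvb : ∀ x ∈ frontier X, 0 ≤ v x) :
    0 ≤ v (γ 0) + u * exitTime γ (interior X) := by
  set T := exitTime γ (interior X)
  have hcont : Continuous γ := continuous_iff_continuousAt.2 fun t => (hγ t).continuousAt
  have hT : γ T ∈ frontier X :=
    frontier_interior_subset (apply_exitTime_mem_frontier hcont isOpen_interior hexit h₀)
  have hmaps : ∀ t ∈ Icc 0 T, γ t ∈ X := by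
    rintro t ⟨ht₀, htT⟩
    rcases htT.lt_or_eq with htT | rfl
    · exact interior_subset (mem_of_lt_exitTime ht₀ htT)
    · exact hX.frontier_subset hT
  have hdecay := sub_le_mul_of_hasFDerivAt_comp_le
    (exitTime_mem hcont isOpen_interior hexit).1 (fun t _ => hγ t)
    (fun t ht => hv _ (hmaps t ht)) (fun t ht => hvf _ (hmaps t ht))
  linarith [hvb _ hT]

/-- Unlike `ae_restrict_of_forall_mem`, `s` need not be measurable: the complement of the MPI
set is not known to be, as the flow is not assumed measurable in the initial point. -/
lemma ae_restrict_of_forall_mem_of_nullMeasurableSet {α : Type*} [MeasurableSpace α]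
    {μ : Measure α} {s : Set α} {p : α → Prop} (hp : NullMeasurableSet {x | p x} (μ.restrict s))
    (h : ∀ x ∈ s, p x) : ∀ᵐ x ∂μ.restrict s, p x := by
  change μ.restrict s {x | p x}ᶜ = 0
  rw [Measure.restrict_apply₀ hp.compl, ← measure_empty (μ := μ)]
  congr 1
  exact eq_empty_of_forall_notMem fun x hx => hx.1 (h x hx.2)

lemma measureReal_le_setIntegral_add_mul_setIntegral {α : Type*} [MeasurableSpace α]
    {μ : Measure α} {s t : Set α} {w τ : α → ℝ} {u : ℝ} (hst : s ⊆ t) (ht : MeasurableSet t) (hs : μ s ≠ ⊤)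
    (hw : IntegrableOn w t μ) (hτ : IntegrableOn τ s μ) (hw₀ : ∀ x ∈ t, 0 ≤ w x)
    (h₁ : ∀ x ∈ s, 1 ≤ w x + u * τ x) :
    μ.real s ≤ ∫ x in t, w x ∂μ + u * ∫ x in s, τ x ∂μ := by
  have hws : IntegrableOn w s μ := hw.mono_set hst
  have hsum : IntegrableOn (fun x => w x + u * τ x) s μ := hws.add (hτ.const_mul u)
  have hone : IntegrableOn (fun _ => (1 : ℝ)) s μ :=
    integrableOn_const hs
  calc μ.real s = ∫ _ in s, (1 : ℝ) ∂μ := by simp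
    _ ≤ ∫ x in s, (w x + u * τ x) ∂μ :=
      integral_mono_ae hone hsum (ae_restrict_of_forall_mem_of_nullMeasurableSet
        (AEStronglyMeasurable.nullMeasurableSet_le aestronglyMeasurable_const
          hsum.aestronglyMeasurable) h₁)
    _ = ∫ x in s, w x ∂μ + u * ∫ x in s, τ x ∂μ := by
      rw [integral_add hws (hτ.const_mul u), integral_const_mul]
    _ ≤ ∫ x in t, w x ∂μ + u * ∫ x in s, τ x ∂μ := by
      gcongr ?_ + _
      exact setIntegral_mono_set hw (ae_restrict_of_forall_mem ht hw₀) hst.eventuallyLE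

theorem dual_cost_bounds_complement_volume_general
    {n : ℕ} (X : Set (EuclideanSpace ℝ (Fin n))) (hX : IsCompact X)
    (hXvol : 0 < volume X)
    (f : EuclideanSpace ℝ (Fin n) → EuclideanSpace ℝ (Fin n))
    -- the flow of ẋ = f(x)
    (φ : EuclideanSpace ℝ (Fin n) → ℝ → EuclideanSpace ℝ (Fin n))
    (hφ0 : ∀ x, φ x 0 = x)
    (hφd : ∀ x t, HasDerivAt (φ x) (f (φ x t)) t)
    -- the MPI set, its complement and the exit time
    (Xinf : Set (EuclideanSpace ℝ (Fin n)))
    (hXinf : Xinf = {x₀ ∈ interior X | ∀ s ≥ (0 : ℝ), φ x₀ s ∈ interior X})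
    (Xinfc : Set (EuclideanSpace ℝ (Fin n))) (hXinfc : Xinfc = interior X \ Xinf)
    (τ : EuclideanSpace ℝ (Fin n) → ℝ)
    (hτ : ∀ y, τ y = sInf {s : ℝ | 0 ≤ s ∧ φ y s ∉ interior X})
    -- finite average exit time
    (hτint : IntegrableOn τ Xinfc volume)
    (τbar : ℝ)
    (hτbar : τbar = (volume X).toReal⁻¹ * ∫ x₀ in Xinfc, τ x₀)
    -- the dual feasible triple (u, v, w)
    (u : ℝ)
    (v w : EuclideanSpace ℝ (Fin n) → ℝ)
    (v' : EuclideanSpace ℝ (Fin n) → EuclideanSpace ℝ (Fin n) →L[ℝ] ℝ)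
    (hv : ∀ x ∈ X, HasFDerivAt v (v' x) x)
    (hw : ContinuousOn w X)
    (hvf : ∀ x ∈ X, v' x (f x) ≤ u)
    (hw1 : ∀ x ∈ X, 0 ≤ v x + 1 ∧ v x + 1 ≤ w x)
    (hw0 : ∀ x ∈ X, 0 ≤ w x)
    (hvb : ∀ x ∈ frontier X, 0 ≤ v x) :
    (volume Xinfc).toReal ≤ (∫ x in X, w x) + u * τbar * (volume X).toReal ∧
    (u = 0 → (volume Xinfc).toReal ≤ ∫ x in X, w x) := by
  have hsub : Xinfc ⊆ X := hXinfc ▸ fun x hx => interior_subset hx.1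
  have hcost : ∀ x₀ ∈ Xinfc, 1 ≤ w x₀ + u * τ x₀ := by
    intro x₀ hx₀
    rw [hXinfc, hXinf] at hx₀
    obtain ⟨hint, hescapes⟩ := hx₀
    have hexit : ∃ t, 0 ≤ t ∧ φ x₀ t ∉ interior X := by
      by_contra! hstays
      exact hescapes ⟨hint, hstays⟩
    have hτx₀ : τ x₀ = exitTime (φ x₀) (interior X) := hτ x₀
    have hval := value_add_mul_exitTime_nonneg hX.isClosed (hφd x₀) ((hφ0 x₀).symm ▸ hint)
      hexit hv hvf hvb
    rw [hφ0] at hval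
    rw [hτx₀]
    linarith [(hw1 x₀ (interior_subset hint)).2]
  have hbound := measureReal_le_setIntegral_add_mul_setIntegral hsub hX.isClosed.measurableSet
    ((measure_mono hsub).trans_lt hX.measure_lt_top).ne (hw.integrableOn_compact hX) hτint
    hw0 hcost
  have hvolX : (volume X).toReal ≠ 0 := ENNReal.toReal_ne_zero.2 ⟨hXvol.ne', hX.measure_lt_top.ne⟩
  have hτbar' : u * τbar * (volume X).toReal = u * ∫ x in Xinfc, τ x := by
    rw [hτbar]
    field_simp
  exact ⟨hτbar' ▸ hbound, fun hu₀ => hbound.trans_eq (by rw [hu₀, zero_mul, add_zero])⟩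

/-- If `(u,v,w)` is dual feasible and the average exit time
`τ̄ = λ(X)⁻¹ ∫_{X∞ᶜ} τ dλ` is finite, then `∫_X w dλ + u·τ̄·λ(X) ≥ λ(X∞ᶜ)`;
in particular, if `u = 0` then `∫_X w dλ ≥ λ(X∞ᶜ)`. -/
theorem dual_cost_bounds_complement_volume
    {n : ℕ} (X : Set (EuclideanSpace ℝ (Fin n))) (hX : IsCompact X)
    (hXvol : 0 < volume X)
    (f : EuclideanSpace ℝ (Fin n) → EuclideanSpace ℝ (Fin n))
    (Kf : NNReal) (hf : LipschitzOnWith Kf f X)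
    -- the flow of ẋ = f(x)
    (φ : EuclideanSpace ℝ (Fin n) → ℝ → EuclideanSpace ℝ (Fin n))
    (hφ0 : ∀ x, φ x 0 = x)
    (hφd : ∀ x t, HasDerivAt (φ x) (f (φ x t)) t)
    -- the MPI set, its complement and the exit time
    (Xinf : Set (EuclideanSpace ℝ (Fin n)))
    (hXinf : Xinf = {x₀ ∈ interior X | ∀ s ≥ (0 : ℝ), φ x₀ s ∈ interior X})
    (Xinfc : Set (EuclideanSpace ℝ (Fin n))) (hXinfc : Xinfc = interior X \ Xinf)
    (τ : EuclideanSpace ℝ (Fin n) → ℝ)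
    (hτ : ∀ y, τ y = sInf {s : ℝ | 0 ≤ s ∧ φ y s ∉ interior X})
    -- finite average exit time
    (hτint : IntegrableOn τ Xinfc volume)
    (τbar : ℝ)
    (hτbar : τbar = (volume X).toReal⁻¹ * ∫ x₀ in Xinfc, τ x₀)
    -- the dual feasible triple (u, v, w)
    (u : ℝ) (hu : 0 ≤ u)
    (v w : EuclideanSpace ℝ (Fin n) → ℝ)
    (v' : EuclideanSpace ℝ (Fin n) → EuclideanSpace ℝ (Fin n) →L[ℝ] ℝ)
    (hv : ∀ x ∈ X, HasFDerivAt v (v' x) x)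
    (hw : ContinuousOn w X)
    (hvf : ∀ x ∈ X, v' x (f x) ≤ u)
    (hw1 : ∀ x ∈ X, 0 ≤ v x + 1 ∧ v x + 1 ≤ w x)
    (hw0 : ∀ x ∈ X, 0 ≤ w x)
    (hvb : ∀ x ∈ frontier X, 0 ≤ v x) :
    (volume Xinfc).toReal ≤ (∫ x in X, w x) + u * τbar * (volume X).toReal ∧
    (u = 0 → (volume Xinfc).toReal ≤ ∫ x in X, w x) :=
  dual_cost_bounds_complement_volume_general X hX hXvol f φ hφ0 hφd Xinf hXinf Xinfc hXinfc τ hτ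
    hτint τbar hτbar u v w v' hv hw hvf hw1 hw0 hvb
end

section
/- Let t > 0 and suppose (u_k, v_k, w_k) are feasible triples for the dual problem (u_k ≥ 0, ∇v_k·f ≤ u_k on X, w_k ≥ v_k + 1, w_k ≥ 0 on X, v_k ≥ 0 on ∂X) such that u_k → 0, ∫_X w_k dλ → λ(X∞^c), and λ(X_t \ X∞) ≤ ε for the chosen t. Then limsup_k ‖w_k − 1_{X∞^c}‖_{L¹(X)} ≤ 6ε. Consequently, if for every ε > 0 there is t with λ(X_t \ X∞) ≤ ε, then w_k → 1_{X∞^c} in L¹(X). -/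
/-!
A trajectory starting in `int X \ X_t` reaches `∂X` by time `t`. Up to that time
`s ↦ u_k s - v_k (φ x s)` is nondecreasing, because `∇v_k · f ≤ u_k`, and `v_k ≥ 0` on `∂X`; so
`v_k + u_k t ≥ 0`, hence `w_k ≥ 1 - u_k t`, on `int X \ X_t`. Together with `w_k ≥ 0` this gives
`|w_k - 1_{X∞ᶜ}| ≤ w_k - 1_{X∞ᶜ} + 2 u_k t + 2 · 1_{X_t \ X∞}` on `X`, and the integral of the
right-hand side tends to `2 λ(X_t \ X∞)`. Measurability comes from Grönwall's inequality: the
flow depends continuously on the initial point, so each `X_t` is open and `X∞` is a `G_δ`.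
-/

open Set MeasureTheory Filter Topology

section FirstExit

variable {E : Type*} [TopologicalSpace E]

theorem exists_first_exit {U : Set E} (hU : IsOpen U) {γ : ℝ → E} (hγ : Continuous γ)
    (h0 : γ 0 ∈ U) {T : ℝ} (hexit : ¬∀ s ∈ Icc 0 T, γ s ∈ U) :
    ∃ τ ∈ Ioc 0 T, γ τ ∉ U ∧ ∀ s ∈ Ico 0 τ, γ s ∈ U := by
  set S := Icc 0 T ∩ γ ⁻¹' Uᶜ
  obtain ⟨s, hs, hsU⟩ := not_forall₂.1 hexit
  have hS : S.Nonempty := ⟨s, hs, hsU⟩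
  have hSbdd : BddBelow S := bddBelow_Icc.mono inter_subset_left
  obtain ⟨⟨hτ0, hτT⟩, hτU⟩ : sInf S ∈ S :=
    (isClosed_Icc.inter (hU.isClosed_compl.preimage hγ)).csInf_mem hS hSbdd
  have hbefore : ∀ s ∈ Ico 0 (sInf S), γ s ∈ U := fun s hs => by
    by_contra hsU
    exact (csInf_le hSbdd ⟨⟨hs.1, hs.2.le.trans hτT⟩, hsU⟩).not_gt hs.2
  exact ⟨sInf S, ⟨hτ0.lt_of_ne fun h => hτU (h ▸ h0), hτT⟩, hτU, hbefore⟩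

theorem exists_first_exit_frontier_s16 {X : Set E} (hX : IsClosed X) {γ : ℝ → E}
    (hγ : Continuous γ) (h0 : γ 0 ∈ interior X) {T : ℝ}
    (hexit : ¬∀ s ∈ Icc 0 T, γ s ∈ interior X) :
    ∃ τ ∈ Ioc 0 T, γ τ ∈ frontier X ∧ ∀ s ∈ Icc 0 τ, γ s ∈ X := by
  obtain ⟨τ, hτ, hτU, hbefore⟩ := exists_first_exit isOpen_interior hγ h0 hexit
  have hτX : γ τ ∈ X := by
    have hτcl : τ ∈ closure (Ico 0 τ) := by
      rw [closure_Ico hτ.1.ne]; exact right_mem_Icc.2 hτ.1.le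
    refine hX.closure_subset_iff.2 ?_ (hγ.continuousWithinAt.mem_closure_image hτcl)
    rintro _ ⟨s, hs, rfl⟩
    exact interior_subset (hbefore s hs)
  refine ⟨τ, hτ, hX.frontier_eq ▸ ⟨hτX, hτU⟩, fun s hs => ?_⟩
  rcases hs.2.lt_or_eq with h | rfl
  · exact interior_subset (hbefore s ⟨hs.1, h⟩)
  · exact hτX

end FirstExit

variable {E : Type*} [NormedAddCommGroup E] [NormedSpace ℝ E]

theorem add_mul_nonneg_of_exit {X : Set E} (hX : IsClosed X) {f : E → E} {γ : ℝ → E}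
    (hγ : ∀ s, HasDerivAt γ (f (γ s)) s) (h0 : γ 0 ∈ interior X) {t : ℝ}
    (hexit : ¬∀ s ∈ Icc 0 t, γ s ∈ interior X) {u : ℝ} (hu : 0 ≤ u) {v : E → ℝ}
    {v' : E → E →L[ℝ] ℝ} (hv : ∀ x ∈ X, HasFDerivAt v (v' x) x)
    (hvf : ∀ x ∈ X, v' x (f x) ≤ u) (hvb : ∀ x ∈ frontier X, 0 ≤ v x) :
    0 ≤ v (γ 0) + u * t := by
  obtain ⟨τ, ⟨hτ0, hτt⟩, hτfr, hmem⟩ :=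
    exists_first_exit_frontier_s16 hX (continuous_iff_continuousAt.2 fun s => (hγ s).continuousAt)
      h0 hexit
  have hderiv : ∀ s ∈ Icc 0 τ,
      HasDerivAt (fun s => u * s - v (γ s)) (u - v' (γ s) (f (γ s))) s := fun s hs => by
    have h := ((hasDerivAt_id' s).const_mul u).sub ((hv _ (hmem s hs)).comp_hasDerivAt s (hγ s))
    rwa [mul_one] at h
  have hmono : MonotoneOn (fun s => u * s - v (γ s)) (Icc 0 τ) := by
    refine monotoneOn_of_hasDerivWithinAt_nonneg (convex_Icc 0 τ)
      (fun s hs => (hderiv s hs).continuousAt.continuousWithinAt)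
      (fun s hs => (hderiv s (interior_subset hs)).hasDerivWithinAt) fun s hs => ?_
    linarith [hvf _ (hmem s (interior_subset hs))]
  have h0τ := hmono (left_mem_Icc.2 hτ0.le) (right_mem_Icc.2 hτ0.le) hτ0.le
  linarith [hvb _ hτfr, mul_le_mul_of_nonneg_left hτt hu]

theorem isOpen_setOf_forall_Icc_mem_interior {X : Set E} {f : E → E} {K : NNReal}
    (hf : LipschitzOnWith K f X) {φ : E → ℝ → E} (hφ0 : ∀ x, φ x 0 = x)
    (hφd : ∀ x t, HasDerivAt (φ x) (f (φ x t)) t) {t : ℝ} (ht : 0 ≤ t) :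
    IsOpen {x₀ ∈ interior X | ∀ s ∈ Icc 0 t, φ x₀ s ∈ interior X} := by
  have hcont : ∀ x, Continuous (φ x) := fun x =>
    continuous_iff_continuousAt.2 fun s => (hφd x s).continuousAt
  rw [Metric.isOpen_iff]
  rintro x₀ ⟨-, hx₀⟩
  obtain ⟨δ, hδ, hthick⟩ := (isCompact_Icc.image (hcont x₀)).exists_cthickening_subset_open
    isOpen_interior (image_subset_iff.2 hx₀)
  have hnear : ∀ s ∈ Icc 0 t, ∀ y, dist y (φ x₀ s) ≤ δ → y ∈ interior X := fun s hs y hy =>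
    hthick (Metric.mem_cthickening_of_dist_le _ _ _ _ (mem_image_of_mem _ hs) hy)
  refine ⟨δ * Real.exp (-(K * t)), by positivity, fun y₀ hy₀ => ?_⟩
  rw [Metric.mem_ball] at hy₀
  have hexp : Real.exp (-(K * t)) ≤ 1 := Real.exp_le_one_iff.2 (by simp; positivity)
  have hy₀X : y₀ ∈ interior X :=
    hnear 0 (left_mem_Icc.2 ht) y₀ (by rw [hφ0]; nlinarith [dist_nonneg (x := y₀) (y := x₀)])
  refine ⟨hy₀X, ?_⟩
  by_contra hexit
  obtain ⟨τ, ⟨hτ0, hτt⟩, hτU, hbefore⟩ :=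
    exists_first_exit isOpen_interior (hcont y₀) (by rwa [hφ0]) hexit
  have hgronwall := dist_le_of_trajectories_ODE_of_mem (v := fun _ => f) (s := fun _ => X)
    (fun _ _ => hf) (hcont x₀).continuousOn (fun s _ => (hφd x₀ s).hasDerivWithinAt)
    (fun s hs => interior_subset (hx₀ s ⟨hs.1, hs.2.le.trans hτt⟩)) (hcont y₀).continuousOn
    (fun s _ => (hφd y₀ s).hasDerivWithinAt) (fun s hs => interior_subset (hbefore s hs))
    le_rfl τ (right_mem_Icc.2 hτ0.le)
  refine hτU (hnear τ ⟨hτ0.le, hτt⟩ _ ((dist_comm _ _).le.trans (hgronwall.trans ?_)))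
  calc dist (φ x₀ 0) (φ y₀ 0) * Real.exp (K * (τ - 0))
      ≤ δ * Real.exp (-(K * t)) * Real.exp (K * t) := by
        rw [hφ0, hφ0, dist_comm]; gcongr; linarith
    _ = δ := by rw [mul_assoc, ← Real.exp_add]; simp

theorem isGδ_setOf_forall_nonneg_mem_interior {X : Set E} {f : E → E} {K : NNReal}
    (hf : LipschitzOnWith K f X) {φ : E → ℝ → E} (hφ0 : ∀ x, φ x 0 = x)
    (hφd : ∀ x t, HasDerivAt (φ x) (f (φ x t)) t) :
    IsGδ {x₀ ∈ interior X | ∀ s ≥ 0, φ x₀ s ∈ interior X} := by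
  have : {x₀ ∈ interior X | ∀ s ≥ 0, φ x₀ s ∈ interior X} =
      ⋂ m : ℕ, {x₀ ∈ interior X | ∀ s ∈ Icc 0 (m : ℝ), φ x₀ s ∈ interior X} := by
    ext x
    simp only [mem_iInter, mem_ofPred_eq, mem_Icc]
    refine ⟨fun hx m => ⟨hx.1, fun s hs => hx.2 s hs.1⟩, fun hx => ⟨(hx 0).1, fun s hs => ?_⟩⟩
    obtain ⟨m, hm⟩ := exists_nat_ge s
    exact (hx m).2 s ⟨hs, hm⟩
  rw [this]
  exact .iInter_of_isOpen fun m => isOpen_setOf_forall_Icc_mem_interior hf hφ0 hφd m.cast_nonneg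

theorem abs_sub_indicator_one_le {α : Type*} {A C : Set α} {g : α → ℝ} {c : ℝ} {x : α}
    (hc : 0 ≤ c) (hg0 : 0 ≤ g x) (hg1 : x ∈ A \ C → 1 - c ≤ g x) :
    |g x - A.indicator (fun _ => 1) x| ≤
      g x - A.indicator (fun _ => 1) x + 2 * c + 2 * C.indicator (fun _ => 1) x := by
  have hC0 : 0 ≤ C.indicator (fun _ => (1 : ℝ)) x := indicator_nonneg (fun _ _ => zero_le_one) x
  refine abs_le'.2 ⟨by linarith, ?_⟩
  suffices A.indicator (fun _ => 1) x ≤ g x + c + C.indicator (fun _ => 1) x by linarith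
  by_cases hAC : x ∈ A \ C
  · rw [indicator_of_mem hAC.1, indicator_of_notMem hAC.2]
    linarith [hg1 hAC]
  · unfold indicator
    split_ifs <;> grind

theorem integral_abs_sub_indicator_one_le {α : Type*} [MeasurableSpace α] {μ : Measure α}
    [IsFiniteMeasure μ] {A C : Set α} (hA : MeasurableSet A) (hC : MeasurableSet C)
    {g : α → ℝ} (hg : Integrable g μ) {c : ℝ} (hc : 0 ≤ c) (hg0 : ∀ᵐ x ∂μ, 0 ≤ g x)
    (hg1 : ∀ᵐ x ∂μ, x ∈ A \ C → 1 - c ≤ g x) :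
    ∫ x, |g x - A.indicator (fun _ => 1) x| ∂μ ≤
      (∫ x, g x ∂μ) - μ.real A + 2 * c * μ.real univ + 2 * μ.real C := by
  have hiA : Integrable (A.indicator fun _ => (1 : ℝ)) μ := (integrable_const 1).indicator hA
  have hiC : Integrable (C.indicator fun _ => (1 : ℝ)) μ := (integrable_const 1).indicator hC
  calc ∫ x, |g x - A.indicator (fun _ => 1) x| ∂μ
      ≤ ∫ x, (g x - A.indicator (fun _ => 1) x + 2 * c + 2 * C.indicator (fun _ => 1) x) ∂μ :=
        integral_mono_ae (hg.sub hiA).abs (((hg.sub hiA).add (integrable_const _)).add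
          (hiC.const_mul 2)) (by filter_upwards [hg0, hg1] with x using abs_sub_indicator_one_le hc)
    _ = _ := by
        rw [integral_add (f := fun x => g x - A.indicator (fun _ => 1) x + 2 * c)
            ((hg.sub hiA).add (integrable_const _)) (hiC.const_mul 2),
          integral_add (f := fun x => g x - A.indicator (fun _ => 1) x) (hg.sub hiA)
            (integrable_const _), integral_sub hg hiA, integral_const, integral_const_mul,
          integral_indicator_const _ hA, integral_indicator_const _ hC, smul_eq_mul, smul_eq_mul]
        ring

theorem eventually_integral_abs_sub_indicator_one_lt {α : Type*} [MeasurableSpace α]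
    {μ : Measure α} [IsFiniteMeasure μ] {A C : Set α} (hA : MeasurableSet A)
    (hC : MeasurableSet C) {g : ℕ → α → ℝ} (hg : ∀ k, Integrable (g k) μ) {c : ℕ → ℝ}
    (hc : ∀ k, 0 ≤ c k) (hg0 : ∀ k, ∀ᵐ x ∂μ, 0 ≤ g k x)
    (hg1 : ∀ k, ∀ᵐ x ∂μ, x ∈ A \ C → 1 - c k ≤ g k x) (hc_lim : Tendsto c atTop (𝓝 0))
    (hg_lim : Tendsto (fun k => ∫ x, g k x ∂μ) atTop (𝓝 (μ.real A))) {δ : ℝ}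
    (hδ : 2 * μ.real C < δ) :
    ∀ᶠ k in atTop, ∫ x, |g k x - A.indicator (fun _ => 1) x| ∂μ < δ := by
  have hbound : Tendsto (fun k => (∫ x, g k x ∂μ) - μ.real A + 2 * c k * μ.real univ
      + 2 * μ.real C) atTop (𝓝 (2 * μ.real C)) := by
    simpa using ((hg_lim.sub_const (μ.real A)).add
      ((hc_lim.const_mul 2).mul_const (μ.real univ))).add_const (2 * μ.real C)
  filter_upwards [hbound.eventually (gt_mem_nhds hδ)] with k hk
  exact (integral_abs_sub_indicator_one_le hA hC (hg k) (hc k) (hg0 k) (hg1 k)).trans_lt hk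

/-- If `(u_k, v_k, w_k)` are dual-feasible triples with `u_k → 0` and
`∫_X w_k dλ → λ(X∞ᶜ)`, and `t > 0` is such that `λ(X_t \ X∞) ≤ ε`, then
`limsup_k ‖w_k − 1_{X∞ᶜ}‖_{L¹(X)} ≤ 6ε`.  Consequently, if for every `ε > 0` there is
such a `t`, then `w_k → 1_{X∞ᶜ}` in `L¹(X)`. -/
theorem wk_converges_to_indicator
    {n : ℕ} (X : Set (EuclideanSpace ℝ (Fin n))) (hX : IsCompact X)
    (f : EuclideanSpace ℝ (Fin n) → EuclideanSpace ℝ (Fin n))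
    (Kf : NNReal) (hf : LipschitzOnWith Kf f X)
    -- the flow of ẋ = f(x)
    (φ : EuclideanSpace ℝ (Fin n) → ℝ → EuclideanSpace ℝ (Fin n))
    (hφ0 : ∀ x, φ x 0 = x)
    (hφd : ∀ x t, HasDerivAt (φ x) (f (φ x t)) t)
    -- the sets X_t, X∞ and X∞ᶜ
    (Xt : ℝ → Set (EuclideanSpace ℝ (Fin n)))
    (hXt : ∀ t, Xt t = {x₀ ∈ interior X | ∀ s ∈ Icc (0 : ℝ) t, φ x₀ s ∈ interior X})
    (Xinf : Set (EuclideanSpace ℝ (Fin n)))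
    (hXinf : Xinf = {x₀ ∈ interior X | ∀ s ≥ (0 : ℝ), φ x₀ s ∈ interior X})
    (Xinfc : Set (EuclideanSpace ℝ (Fin n))) (hXinfc : Xinfc = interior X \ Xinf)
    -- the sequence of dual-feasible triples (u_k, v_k, w_k)
    (u : ℕ → ℝ) (v w : ℕ → EuclideanSpace ℝ (Fin n) → ℝ)
    (v' : ℕ → EuclideanSpace ℝ (Fin n) → EuclideanSpace ℝ (Fin n) →L[ℝ] ℝ)
    (hu : ∀ k, 0 ≤ u k)
    (hv : ∀ k, ∀ x ∈ X, HasFDerivAt (v k) (v' k x) x)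
    (hw : ∀ k, ContinuousOn (w k) X)
    (hvf : ∀ k, ∀ x ∈ X, v' k x (f x) ≤ u k)
    (hw1 : ∀ k, ∀ x ∈ X, v k x + 1 ≤ w k x)
    (hw0 : ∀ k, ∀ x ∈ X, 0 ≤ w k x)
    (hvb : ∀ k, ∀ x ∈ frontier X, 0 ≤ v k x)
    -- convergence of the costs and of the slack variables
    (huconv : Tendsto u atTop (nhds 0))
    (hwconv : Tendsto (fun k => ∫ x in X, w k x) atTop (nhds (volume Xinfc).toReal)) :
    (∀ ε : ℝ, 0 ≤ ε → ∀ t : ℝ, 0 < t → volume (Xt t \ Xinf) ≤ ENNReal.ofReal ε →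
      limsup (fun k => ∫ x in X, |w k x - Xinfc.indicator (fun _ => (1 : ℝ)) x|) atTop
        ≤ 6 * ε) ∧
    ((∀ ε : ℝ, 0 < ε → ∃ t : ℝ, 0 < t ∧ volume (Xt t \ Xinf) ≤ ENNReal.ofReal ε) →
      Tendsto (fun k => ∫ x in X, |w k x - Xinfc.indicator (fun _ => (1 : ℝ)) x|)
        atTop (nhds 0)) := by
  have : IsFiniteMeasure (volume.restrict X) := ⟨by simpa using hX.measure_lt_top⟩
  have hXm : MeasurableSet X := hX.isClosed.measurableSet
  have hXinfm : MeasurableSet Xinf :=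
    hXinf ▸ (isGδ_setOf_forall_nonneg_mem_interior hf hφ0 hφd).measurableSet
  have hXinfcm : MeasurableSet Xinfc := hXinfc ▸ isOpen_interior.measurableSet.diff hXinfm
  have hCm : ∀ t, 0 ≤ t → MeasurableSet (Xt t \ Xinf) := fun t ht =>
    (hXt t ▸ isOpen_setOf_forall_Icc_mem_interior hf hφ0 hφd ht).measurableSet.diff hXinfm
  have hfeas : ∀ k t, ∀ x ∈ Xinfc \ (Xt t \ Xinf), 1 - u k * t ≤ w k x := by
    rintro k t x ⟨hxA, hxC⟩
    rw [hXinfc] at hxA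
    have := add_mul_nonneg_of_exit hX.isClosed (hφd x) ((hφ0 x).symm ▸ hxA.1)
      (fun hstay => hxC ⟨hXt t ▸ ⟨hxA.1, hstay⟩, hxA.2⟩) (hu k) (hv k) (hvf k) (hvb k)
    rw [hφ0] at this
    linarith [hw1 k x (interior_subset hxA.1)]
  have hAX : Xinfc ⊆ X := hXinfc ▸ sdiff_subset.trans interior_subset
  have hsmall_eventually : ∀ t, 0 ≤ t → ∀ δ > 2 * volume.real (Xt t \ Xinf),
      ∀ᶠ k in atTop, ∫ x in X, |w k x - Xinfc.indicator (fun _ => (1 : ℝ)) x| < δ := by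
    intro t ht δ hδ
    have hCX : Xt t \ Xinf ⊆ X := fun x hx => interior_subset (hXt t ▸ hx.1).1
    refine eventually_integral_abs_sub_indicator_one_lt hXinfcm (hCm t ht)
      (fun k => (hw k).integrableOn_compact hX) (fun k => mul_nonneg (hu k) ht)
      (fun k => ae_restrict_of_forall_mem hXm (hw0 k))
      (fun k => ae_restrict_of_forall_mem hXm fun x _ => hfeas k t x)
      (by simpa using huconv.mul_const t) ?_ ?_
    · rwa [measureReal_restrict_apply hXinfcm, inter_eq_left.2 hAX]
    · rwa [measureReal_restrict_apply (hCm t ht), inter_eq_left.2 hCX]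
  have hnonneg : ∀ k, 0 ≤ ∫ x in X, |w k x - Xinfc.indicator (fun _ => (1 : ℝ)) x| :=
    fun k => integral_nonneg fun _ => abs_nonneg _
  refine ⟨fun ε hε t ht hvol => ?_, fun hsmall => ?_⟩
  · have hCε : volume.real (Xt t \ Xinf) ≤ ε := ENNReal.toReal_le_of_le_ofReal hε hvol
    refine (le_of_forall_gt_imp_ge_of_dense fun δ hδ => ?_).trans (by linarith : 2 * _ ≤ 6 * ε)
    exact limsup_le_of_le (isCoboundedUnder_le_of_le _ hnonneg)
      ((hsmall_eventually t ht.le δ hδ).mono fun _ => le_of_lt)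
  · refine tendsto_order.2
      ⟨fun δ hδ => .of_forall fun k => hδ.trans_le (hnonneg k), fun δ hδ => ?_⟩
    obtain ⟨t, ht, hvol⟩ := hsmall (δ / 4) (by positivity)
    have hCδ : volume.real (Xt t \ Xinf) ≤ δ / 4 :=
      ENNReal.toReal_le_of_le_ofReal (by positivity) hvol
    exact hsmall_eventually t ht.le δ (by linarith)
end
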